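/- (Proposition 4) Let N > 1 and d > 0 with d² ≤ (16N²/27)·((8N² − 6)·√(1 − 3/(4N²)) + 8N² − 9). Then for every A > 0, the dispersion relation F(z) + A = 0 has exactly two real solutions z with z² ≠ 1: exactly one in the interval I₁ and exactly one in the interval I₂. -/

import Mathlib

/-- `F N d z = (1 - N z)² (1 - d²/(z² - 1))`. -/
noncomputable def F (N d z : ℝ) : ℝ := (1 - N * z) ^ 2 * (1 - d ^ 2 / (z ^ 2 - 1))

/-- The interval `I₁ = (-√(1+d²), -1)`. -/
noncomputable def I₁ (d : ℝ) : Set ℝ := Set.Ioo (-Real.sqrt (1 + d ^ 2)) (-1)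

/-- The interval `I₂ = (1, √(1+d²))`. -/
noncomputable def I₂ (d : ℝ) : Set ℝ := Set.Ioo 1 (Real.sqrt (1 + d ^ 2))

/-!
A root of `F + A = 0` needs `F < 0`, which forces `0 < z² - 1 < d²`, i.e. `z ∈ I₁ ∪ I₂`. `F`
vanishes at `z = ±√(1+d²)` and is very negative near `z = ±1`, so each interval contains a root by
the intermediate value theorem. Uniqueness comes from monotonicity:
`F'(z) = 2 (N z - 1) (N (z² - 1)² + d² (N - z)) / (z² - 1)²`, so `F` decreases on `z < -1`. On
`z > 1` the second factor is positive except at one point exactly when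
`d² ≤ N · min_{z > N} (z² - 1)² / (z - N)`; the minimum is attained at the root
`z = (2N + s)/3`, `s = √(4N² - 3)`, of `3z² - 4Nz + 1`, and its value is the bound of the
hypothesis.
-/

open Set

lemma hasDerivAt_F (N d : ℝ) {z : ℝ} (hz : z ^ 2 - 1 ≠ 0) :
    HasDerivAt (F N d)
      (2 * (N * z - 1) * (N * (z ^ 2 - 1) ^ 2 + d ^ 2 * (N - z)) / (z ^ 2 - 1) ^ 2) z := by
  have h := ((((hasDerivAt_id z).const_mul N).const_sub 1).pow 2).mul
    (((hasDerivAt_const z (d ^ 2)).div ((hasDerivAt_pow 2 z).sub_const 1) hz).const_sub 1)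
  refine h.congr_deriv ?_
  simp only [id, Pi.pow_apply, Pi.div_apply]
  field_simp
  ring

lemma continuousAt_F (N d : ℝ) {z : ℝ} (hz : z ^ 2 - 1 ≠ 0) : ContinuousAt (F N d) z :=
  (hasDerivAt_F N d hz).continuousAt

lemma F_eq_zero_of_sq_eq {N d z : ℝ} (hd : d ≠ 0) (hz : z ^ 2 = 1 + d ^ 2) : F N d z = 0 := by
  rw [F, show z ^ 2 - 1 = d ^ 2 by linarith, div_self (pow_ne_zero 2 hd), sub_self, mul_zero]

lemma mem_I₁_union_I₂_of_F_neg {N d z : ℝ} (h : F N d z < 0) : z ∈ I₁ d ∪ I₂ d := by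
  have hlt : 1 < d ^ 2 / (z ^ 2 - 1) := by
    by_contra! hle
    exact h.not_ge (mul_nonneg (sq_nonneg _) (sub_nonneg.mpr hle))
  obtain ⟨hpos, hsq⟩ : 0 < z ^ 2 - 1 ∧ z ^ 2 - 1 < d ^ 2 := by
    rcases one_lt_div_iff.mp hlt with h | ⟨hneg, hd⟩
    · exact h
    · exact absurd (hd.trans hneg) (sq_nonneg d).not_gt
  have habs₁ : 1 < |z| := by rw [← one_lt_sq_iff_one_lt_abs]; linarith
  have habs₂ : |z| < √(1 + d ^ 2) := (Real.lt_sqrt (abs_nonneg z)).2 (by rw [sq_abs]; linarith)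
  rw [abs_lt] at habs₂
  rcases lt_abs.mp habs₁ with hz | hz
  · exact Or.inr ⟨hz, habs₂.2⟩
  · exact Or.inl ⟨habs₂.1, by linarith⟩

lemma strictMonoOn_of_hasDerivAt_pos_of_ne {D : Set ℝ} (hD : Convex ℝ D) {f f' : ℝ → ℝ} {c : ℝ}
    (hf : ∀ x ∈ D, HasDerivAt f (f' x) x) (hf' : ∀ x ∈ D, x ≠ c → 0 < f' x) :
    StrictMonoOn f D := by
  have avoiding : ∀ s ⊆ D, Convex ℝ s → c ∉ interior s → StrictMonoOn f s :=
    fun s hsD hs hc ↦ strictMonoOn_of_hasDerivWithinAt_pos hs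
      (fun x hx ↦ (hf x (hsD hx)).continuousAt.continuousWithinAt)
      (fun x hx ↦ (hf x (hsD (interior_subset hx))).hasDerivWithinAt)
      (fun x hx ↦ hf' x (hsD (interior_subset hx)) (ne_of_mem_of_not_mem hx hc))
  by_cases hcD : c ∈ D
  · have hle := avoiding (D ∩ Iic c) inter_subset_left (hD.inter (convex_Iic c))
      (by simp [interior_inter])
    have hge := avoiding (D ∩ Ici c) inter_subset_left (hD.inter (convex_Ici c))
      (by simp [interior_inter])
    have := hle.union hge ⟨⟨hcD, self_mem_Iic⟩, fun x hx ↦ hx.2⟩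
      ⟨⟨hcD, self_mem_Ici⟩, fun x hx ↦ hx.2⟩
    rwa [← inter_union_distrib_left, Iic_union_Ici, inter_univ] at this
  · exact avoiding D subset_rfl hD (fun h ↦ hcD (interior_subset h))

lemma strictAntiOn_F_Iio {N : ℝ} (d : ℝ) (hN : 0 < N) : StrictAntiOn (F N d) (Iio (-1)) := by
  have hsq : ∀ z ∈ Iio (-1 : ℝ), 0 < z ^ 2 - 1 := fun z (hz : z < -1) ↦ by nlinarith
  refine strictAntiOn_of_hasDerivWithinAt_neg (convex_Iio _)
    (fun z hz ↦ (continuousAt_F N d (hsq z hz).ne').continuousWithinAt)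
    (fun z hz ↦ (hasDerivAt_F N d (hsq z (interior_subset hz)).ne').hasDerivWithinAt)
    (fun z hz ↦ ?_)
  rw [interior_Iio] at hz
  replace hz : z < -1 := hz
  have hfactor : 0 < N * (z ^ 2 - 1) ^ 2 + d ^ 2 * (N - z) :=
    add_pos_of_pos_of_nonneg (by have := hsq z hz; positivity)
      (mul_nonneg (sq_nonneg d) (by linarith))
  exact div_neg_of_neg_of_pos (mul_neg_of_neg_of_pos (by nlinarith) hfactor)
    (by have := hsq z hz; positivity)

lemma threshold_eq {N : ℝ} (hN : 0 < N) (h3 : 3 ≤ 4 * N ^ 2) :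
    16 * N ^ 2 / 27 * ((8 * N ^ 2 - 6) * √(1 - 3 / (4 * N ^ 2)) + 8 * N ^ 2 - 9) =
      16 * N / 27 * (√(4 * N ^ 2 - 3) + 2 * N) ^ 2 * (√(4 * N ^ 2 - 3) - N) := by
  have hsqrt : √(1 - 3 / (4 * N ^ 2)) = √(4 * N ^ 2 - 3) / (2 * N) := by
    rw [show 1 - 3 / (4 * N ^ 2) = (4 * N ^ 2 - 3) / (2 * N) ^ 2 by field_simp; ring,
      Real.sqrt_div (by linarith), Real.sqrt_sq (by linarith)]
  have hs : √(4 * N ^ 2 - 3) ^ 2 = 4 * N ^ 2 - 3 := Real.sq_sqrt (by linarith)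
  rw [hsqrt]
  generalize √(4 * N ^ 2 - 3) = s at hs ⊢
  field_simp
  linear_combination (-2 * (s + 3 * N)) * hs

lemma mul_sub_lt_sq_sub_one_sq {N s z : ℝ} (hN : 1 < N) (hs : s ^ 2 = 4 * N ^ 2 - 3)
    (hs₀ : 0 ≤ s) (hz : 0 < z) (hzc : z ≠ (2 * N + s) / 3) :
    16 * (s + 2 * N) ^ 2 * (s - N) * (z - N) < 27 * (z ^ 2 - 1) ^ 2 := by
  have hsN : N < s := by nlinarith
  have hsplit : 27 * (z ^ 2 - 1) ^ 2 - 16 * (s + 2 * N) ^ 2 * (s - N) * (z - N) =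
      (3 * z - 2 * N - s) ^ 2 *
        (3 * z ^ 2 + (4 * N + 2 * s) * z + (8 * N ^ 2 + 4 * N * s - 9)) := by
    linear_combination (9 + 12 * N * s + 24 * N ^ 2 - 18 * z * s - 36 * z * N + 9 * z ^ 2) * hs
  have hsq : 0 < (3 * z - 2 * N - s) ^ 2 :=
    pow_two_pos_of_ne_zero (fun h ↦ hzc (by linarith))
  have hquad : 0 < 3 * z ^ 2 + (4 * N + 2 * s) * z + (8 * N ^ 2 + 4 * N * s - 9) := by
    have : 0 < (4 * N + 2 * s) * z := by positivity
    nlinarith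
  nlinarith [mul_pos hsq hquad]

lemma deriv_factor_F_pos {N d s z : ℝ} (hN : 1 < N) (hs : s ^ 2 = 4 * N ^ 2 - 3) (hs₀ : 0 ≤ s)
    (hd : d ^ 2 ≤ 16 * N / 27 * (s + 2 * N) ^ 2 * (s - N)) (hz : 1 < z)
    (hzc : z ≠ (2 * N + s) / 3) :
    0 < N * (z ^ 2 - 1) ^ 2 + d ^ 2 * (N - z) := by
  have hz₀ : 0 < N * (z ^ 2 - 1) ^ 2 := mul_pos (by linarith) (pow_pos (by nlinarith) 2)
  rcases le_or_gt z N with hzN | hNz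
  · nlinarith [mul_nonneg (sq_nonneg d) (sub_nonneg.mpr hzN)]
  · have hmin := mul_sub_lt_sq_sub_one_sq hN hs hs₀ (by linarith) hzc
    have := mul_le_mul_of_nonneg_right hd (sub_nonneg.mpr hNz.le)
    nlinarith [mul_lt_mul_of_pos_left hmin (by linarith : (0 : ℝ) < N)]

lemma strictMonoOn_F_Ioi {N d : ℝ} (hN : 1 < N)
    (hd : d ^ 2 ≤ 16 * N ^ 2 / 27 * ((8 * N ^ 2 - 6) * √(1 - 3 / (4 * N ^ 2)) + 8 * N ^ 2 - 9)) :
    StrictMonoOn (F N d) (Ioi 1) := by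
  rw [threshold_eq (by linarith) (by nlinarith)] at hd
  have hsq : ∀ z ∈ Ioi (1 : ℝ), 0 < z ^ 2 - 1 := fun z (hz : 1 < z) ↦ by nlinarith
  refine strictMonoOn_of_hasDerivAt_pos_of_ne (convex_Ioi 1) (c := (2 * N + √(4 * N ^ 2 - 3)) / 3)
    (fun z hz ↦ hasDerivAt_F N d (hsq z hz).ne') (fun z (hz : 1 < z) hzc ↦ ?_)
  have hfactor := deriv_factor_F_pos hN (Real.sq_sqrt (by nlinarith)) (Real.sqrt_nonneg _) hd hz hzc
  have := hsq z hz
  exact div_pos (mul_pos (mul_pos two_pos (by nlinarith)) hfactor) (by positivity)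

lemma F_add_neg_of_sq_sub_one_lt {N d A z : ℝ} (hN : 1 < N) (hA : 0 ≤ A) (hz : 1 < |z|)
    (hw : (z ^ 2 - 1) * ((N - 1) ^ 2 + A) < d ^ 2 * (N - 1) ^ 2) : F N d z + A < 0 := by
  have hw₀ : 0 < z ^ 2 - 1 := by rw [sub_pos, one_lt_sq_iff_one_lt_abs]; exact hz
  have hN₁ : 0 < (N - 1) ^ 2 := pow_pos (by linarith) 2
  have hbound : (N - 1) ^ 2 * (1 - d ^ 2 / (z ^ 2 - 1)) < -A := by
    rw [show (N - 1) ^ 2 * (1 - d ^ 2 / (z ^ 2 - 1)) =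
        ((N - 1) ^ 2 * (z ^ 2 - 1) - d ^ 2 * (N - 1) ^ 2) / (z ^ 2 - 1) by field_simp,
      div_lt_iff₀ hw₀]
    linarith
  have hneg : 1 - d ^ 2 / (z ^ 2 - 1) ≤ 0 := by
    by_contra! h
    linarith [mul_pos hN₁ h]
  have hcoef : (N - 1) ^ 2 ≤ (1 - N * z) ^ 2 := by
    have : N - 1 ≤ |1 - N * z| := calc
      N - 1 ≤ N * |z| - 1 := by nlinarith
      _ = |N * z| - |1| := by rw [abs_mul, abs_of_pos (by linarith : 0 < N), abs_one]
      _ ≤ |N * z - 1| := abs_sub_abs_le_abs_sub _ _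
      _ = |1 - N * z| := abs_sub_comm _ _
    simpa only [sq_abs] using pow_le_pow_left₀ (by linarith) this 2
  calc F N d z + A ≤ (N - 1) ^ 2 * (1 - d ^ 2 / (z ^ 2 - 1)) + A := by
        rw [F]; gcongr ?_ + A; exact mul_le_mul_of_nonpos_right hcoef hneg
    _ < 0 := by linarith

lemma exists_F_add_neg {N d A : ℝ} (hN : 1 < N) (hd : d ≠ 0) (hA : 0 ≤ A) :
    ∃ a, 1 < a ∧ a < √(1 + d ^ 2) ∧ F N d a + A < 0 ∧ F N d (-a) + A < 0 := by
  set w := d ^ 2 * (N - 1) ^ 2 / (2 * ((N - 1) ^ 2 + A))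
  have hN₁ : 0 < (N - 1) ^ 2 := pow_pos (by linarith) 2
  have hd₂ : 0 < d ^ 2 := by positivity
  have hw₀ : 0 < w := by positivity
  have hwd : w < d ^ 2 := by
    rw [div_lt_iff₀ (by positivity)]
    nlinarith [mul_pos hd₂ hN₁]
  have hw : w * ((N - 1) ^ 2 + A) < d ^ 2 * (N - 1) ^ 2 := by
    rw [div_mul_eq_mul_div, div_lt_iff₀ (by positivity)]
    nlinarith [mul_pos hd₂ hN₁, mul_pos (mul_pos hd₂ hN₁) (by positivity : 0 < (N - 1) ^ 2 + A)]
  have ha : √(1 + w) ^ 2 - 1 = w := by rw [Real.sq_sqrt (by positivity)]; ring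
  have ha₁ : 1 < √(1 + w) := (Real.lt_sqrt zero_le_one).2 (by linarith)
  refine ⟨√(1 + w), ha₁, Real.sqrt_lt_sqrt (by positivity) (by linarith), ?_, ?_⟩
  · exact F_add_neg_of_sq_sub_one_lt hN hA (by rwa [abs_of_pos (by linarith)]) (by rwa [ha])
  · exact F_add_neg_of_sq_sub_one_lt hN hA (by rwa [abs_neg, abs_of_pos (by linarith)])
      (by rwa [neg_sq, ha])

lemma exists_root_mem_I₂ {N d A : ℝ} (hN : 1 < N) (hd : d ≠ 0) (hA : 0 < A) :
    ∃ z ∈ I₂ d, F N d z + A = 0 := by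
  obtain ⟨a, ha₁, har, hFa, -⟩ := exists_F_add_neg hN hd hA.le
  have hFr : F N d √(1 + d ^ 2) = 0 := F_eq_zero_of_sq_eq hd (Real.sq_sqrt (by positivity))
  have hcont : ContinuousOn (fun z ↦ F N d z + A) (Icc a √(1 + d ^ 2)) := fun z hz ↦
    ((continuousAt_F N d (by nlinarith [hz.1] : 0 < z ^ 2 - 1).ne').add
      continuousAt_const).continuousWithinAt
  obtain ⟨z, hz, hFz⟩ := intermediate_value_Ioo har.le hcont
    ⟨hFa, show 0 < F N d √(1 + d ^ 2) + A by rw [hFr]; linarith⟩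
  exact ⟨z, ⟨ha₁.trans hz.1, hz.2⟩, hFz⟩

lemma exists_root_mem_I₁ {N d A : ℝ} (hN : 1 < N) (hd : d ≠ 0) (hA : 0 < A) :
    ∃ z ∈ I₁ d, F N d z + A = 0 := by
  obtain ⟨a, ha₁, har, -, hFa⟩ := exists_F_add_neg hN hd hA.le
  have hFr : F N d (-√(1 + d ^ 2)) = 0 :=
    F_eq_zero_of_sq_eq hd (by rw [neg_sq, Real.sq_sqrt (by positivity)])
  have hcont : ContinuousOn (fun z ↦ F N d z + A) (Icc (-√(1 + d ^ 2)) (-a)) := fun z hz ↦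
    ((continuousAt_F N d (by nlinarith [hz.2] : 0 < z ^ 2 - 1).ne').add
      continuousAt_const).continuousWithinAt
  obtain ⟨z, hz, hFz⟩ := intermediate_value_Ioo' (neg_le_neg har.le) hcont
    ⟨hFa, show 0 < F N d (-√(1 + d ^ 2)) + A by rw [hFr]; linarith⟩
  exact ⟨z, ⟨hz.1, hz.2.trans (neg_lt_neg ha₁)⟩, hFz⟩

lemma existsUnique_root_mem_I₁ {N d A : ℝ} (hN : 1 < N) (hd : d ≠ 0) (hA : 0 < A) :
    ∃! z, z ∈ I₁ d ∧ F N d z + A = 0 := by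
  obtain ⟨z, hz, hFz⟩ := exists_root_mem_I₁ hN hd hA
  exact ⟨z, ⟨hz, hFz⟩, fun y ⟨hy, hFy⟩ ↦
    (strictAntiOn_F_Iio d (zero_lt_one.trans hN)).injOn hy.2 hz.2 (by linarith)⟩

lemma existsUnique_root_mem_I₂ {N d A : ℝ} (hN : 1 < N) (hd : d ≠ 0)
    (hcase : d ^ 2 ≤ 16 * N ^ 2 / 27 * ((8 * N ^ 2 - 6) * √(1 - 3 / (4 * N ^ 2)) + 8 * N ^ 2 - 9))
    (hA : 0 < A) :
    ∃! z, z ∈ I₂ d ∧ F N d z + A = 0 := by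
  obtain ⟨z, hz, hFz⟩ := exists_root_mem_I₂ hN hd hA
  exact ⟨z, ⟨hz, hFz⟩, fun y ⟨hy, hFy⟩ ↦
    (strictMonoOn_F_Ioi hN hcase).injOn hy.1 hz.1 (by linarith)⟩

/-- Proposition 4: for `N > 1` and `d² ≤ (16N²/27)((8N² - 6)√(1 - 3/(4N²)) + 8N² - 9)`,
the dispersion relation `F(z) + A = 0` has exactly two real solutions with `z² ≠ 1`:
exactly one in `I₁` and exactly one in `I₂`, for every `A > 0`. -/
theorem stmt_16 (N d A : ℝ) (hN : 1 < N) (hd : 0 < d)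
    (hcase : d ^ 2 ≤ (16 * N ^ 2 / 27) *
        ((8 * N ^ 2 - 6) * Real.sqrt (1 - 3 / (4 * N ^ 2)) + 8 * N ^ 2 - 9))
    (hA : 0 < A) :
    {z : ℝ | z ^ 2 ≠ 1 ∧ F N d z + A = 0}.ncard = 2 ∧
    (∃! z, z ∈ I₁ d ∧ F N d z + A = 0) ∧
    (∃! z, z ∈ I₂ d ∧ F N d z + A = 0) ∧
    (∀ z : ℝ, z ^ 2 ≠ 1 → F N d z + A = 0 → z ∈ I₁ d ∪ I₂ d) := by
  have hroots : ∀ z, F N d z + A = 0 → z ∈ I₁ d ∪ I₂ d :=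
    fun z hz ↦ mem_I₁_union_I₂_of_F_neg (by linarith)
  have h₁ := existsUnique_root_mem_I₁ hN hd.ne' hA
  have h₂ := existsUnique_root_mem_I₂ hN hd.ne' hcase hA
  refine ⟨?_, h₁, h₂, fun z _ ↦ hroots z⟩
  obtain ⟨z₁, ⟨hz₁, hF₁⟩, huniq₁⟩ := h₁
  obtain ⟨z₂, ⟨hz₂, hF₂⟩, huniq₂⟩ := h₂
  have hset : {z : ℝ | z ^ 2 ≠ 1 ∧ F N d z + A = 0} = {z₁, z₂} := by
    ext z
    refine ⟨fun ⟨_, hz⟩ ↦ ?_, ?_⟩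
    · rcases hroots z hz with h | h
      exacts [Or.inl (huniq₁ z ⟨h, hz⟩), Or.inr (huniq₂ z ⟨h, hz⟩)]
    · rintro (rfl | rfl)
      exacts [⟨(by nlinarith [hz₁.2] : 1 < z ^ 2).ne', hF₁⟩,
        ⟨(by nlinarith [hz₂.1] : 1 < z ^ 2).ne', hF₂⟩]
  rw [hset, ncard_pair (by linarith [hz₁.2, hz₂.1])]
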